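/- Let G be a finite group. Then d(G) + 1 ≤ D_o(G) ≤ |G|. Moreover, if G is abelian then d(G) + 1 = D_o(G), and D_o(G) = |G| holds if and only if G is cyclic. -/

import Mathlib

/-- A list (ordered sequence) over `G` is product-one free if no nonempty
order-preserving sublist has product equal to the identity. -/
def OrderedProductOneFree {G : Type*} [Group G] (l : List G) : Prop :=
  ∀ t : List G, t.Sublist l → t ≠ [] → t.prod ≠ 1

/-- The ordered Davenport constant: the smallest `k` such that every list of
elements of `G` of length at least `k` has a nonempty sublist with product one. -/
noncomputable def orderedDavenport (G : Type*) [Group G] : ℕ :=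
  sInf {k : ℕ | ∀ l : List G, k ≤ l.length → ¬ OrderedProductOneFree l}
/-- A multiset (sequence) over `G` is product-one free if no nonempty submultiset
admits an ordering of its terms whose product is the identity. -/
def ProductOneFreeM {G : Type*} [Group G] (s : Multiset G) : Prop :=
  ∀ t : Multiset G, t ≤ s → t ≠ 0 → ∀ l : List G, (l : Multiset G) = t → l.prod ≠ 1

/-- The small Davenport constant: the maximal cardinality of a product-one free
multiset over `G`. -/
noncomputable def smallDavenport (G : Type*) [Group G] : ℕ :=
  sSup {n : ℕ | ∃ s : Multiset G, ProductOneFreeM s ∧ Multiset.card s = n}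

/-!
The bound `D_o(G) ≤ |G|` is the pigeonhole principle on the `|G| + 1` prefix products of a list:
two of them agree, and the factor between them is a nonempty block with product one.
A product-one free multiset lists as a product-one free list, which gives `d(G) < D_o(G)`;
for abelian `G` the order of a product is irrelevant, so the two notions coincide.

If `G = ⟨g⟩` has order `n`, the list `gⁿ⁻¹` is product-one free. Conversely, let `u` be a
product-one free list of length `|G| - 1` and `Σ(v)` (`subprods v`) the set of products of
sublists of `v`. Prepending a letter `a` to a suffix `v` of `u` adds at least one element to
`Σ(v)`, namely `1 ∉ a Σ(v)`, so `|Σ(v)| = |v| + 1` for every suffix and `Σ(u) = G`. By this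
tightness `Σ(v)` and `a Σ(v)` overlap, so `a ∈ Σ(v) Σ(v)⁻¹`, and by induction along the suffixes
every subproduct lies in the cyclic group generated by the last letter of `u`.
-/

open Finset

section ProductOneFree

variable {G : Type*} [Group G]

namespace OrderedProductOneFree

theorem sublist {l l' : List G} (h : OrderedProductOneFree l) (hs : l'.Sublist l) :
    OrderedProductOneFree l' :=
  fun t ht => h t (ht.trans hs)

theorem not_of_prod_take_eq {l : List G} {i j : ℕ} (hij : i < j) (hj : j ≤ l.length)
    (heq : (l.take i).prod = (l.take j).prod) : ¬ OrderedProductOneFree l := by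
  intro hfree
  have hprod := List.prod_take_mul_prod_drop (l.take j) i
  rw [List.take_take, min_eq_left hij.le, ← heq, mul_eq_left] at hprod
  refine hfree _ ((List.drop_sublist _ _).trans (List.take_sublist _ _)) ?_ hprod
  rw [← List.length_pos_iff, List.length_drop, List.length_take]
  omega

end OrderedProductOneFree

theorem not_orderedProductOneFree_of_card_le [Fintype G] {l : List G}
    (hl : Fintype.card G ≤ l.length) : ¬ OrderedProductOneFree l := by
  obtain ⟨i, j, hne, heq⟩ := Fintype.exists_ne_map_eq_of_card_lt
    (fun i : Fin (Fintype.card G + 1) => (l.take i).prod) (by simp)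
  rcases Fin.lt_or_lt_of_ne hne with hij | hji
  · exact OrderedProductOneFree.not_of_prod_take_eq hij (by omega) heq
  · exact OrderedProductOneFree.not_of_prod_take_eq hji (by omega) heq.symm

theorem OrderedProductOneFree.length_lt_card [Fintype G] {l : List G}
    (h : OrderedProductOneFree l) : l.length < Fintype.card G :=
  lt_of_not_ge fun hl => not_orderedProductOneFree_of_card_le hl h

theorem orderedProductOneFree_nil : OrderedProductOneFree ([] : List G) :=
  fun _ ht htne => absurd (List.sublist_nil.1 ht) htne

theorem orderedProductOneFree_replicate (g : G) {m : ℕ} (hm : m < orderOf g) :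
    OrderedProductOneFree (List.replicate m g) := by
  rintro t ht htne hprod
  obtain ⟨k, hkm, rfl⟩ := List.sublist_replicate_iff.1 ht
  rw [List.prod_replicate] at hprod
  have hk : 0 < k := Nat.pos_of_ne_zero (by rintro rfl; exact htne rfl)
  exact absurd (Nat.le_of_dvd hk (orderOf_dvd_of_pow_eq_one hprod)) (by omega)

theorem ProductOneFreeM.orderedProductOneFree {l : List G}
    (h : ProductOneFreeM (l : Multiset G)) : OrderedProductOneFree l :=
  fun t ht htne => h t (Multiset.coe_le.2 ht.subperm) (by simpa using htne) t rfl

theorem OrderedProductOneFree.productOneFreeM (hcomm : ∀ x y : G, x * y = y * x) {l : List G}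
    (h : OrderedProductOneFree l) : ProductOneFreeM (l : Multiset G) := by
  rintro _ hle htne t rfl hprod
  obtain ⟨t', hperm, hsub⟩ := Multiset.coe_le.1 hle
  refine h t' hsub (by rintro rfl; exact htne (by simpa using hperm)) ?_
  rw [hperm.prod_eq' (List.pairwise_of_forall hcomm), hprod]

theorem ProductOneFreeM.card_lt_card [Fintype G] {s : Multiset G} (h : ProductOneFreeM s) :
    Multiset.card s < Fintype.card G := by
  rw [← Multiset.coe_toList s] at h
  simpa using h.orderedProductOneFree.length_lt_card

section Subprods

variable [DecidableEq G]

def subprods (u : List G) : Finset G :=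
  (u.sublists.map List.prod).toFinset

theorem mem_subprods {u : List G} {x : G} :
    x ∈ subprods u ↔ ∃ t : List G, t.Sublist u ∧ t.prod = x := by
  simp [subprods]

@[simp]
theorem subprods_nil : subprods ([] : List G) = {1} := by
  ext x
  simp [mem_subprods, eq_comm]

theorem subprods_cons (a : G) (u : List G) :
    subprods (a :: u) = subprods u ∪ (subprods u).image (a * ·) := by
  ext x
  simp only [mem_subprods, mem_union, mem_image, List.sublist_cons_iff]
  constructor
  · rintro ⟨t, ht | ⟨r, rfl, hr⟩, rfl⟩
    · exact Or.inl ⟨t, ht, rfl⟩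
    · exact Or.inr ⟨r.prod, ⟨r, hr, rfl⟩, List.prod_cons.symm⟩
  · rintro (⟨t, ht, rfl⟩ | ⟨_, ⟨t, ht, rfl⟩, rfl⟩)
    · exact ⟨t, Or.inl ht, rfl⟩
    · exact ⟨a :: t, Or.inr ⟨t, rfl, ht⟩, List.prod_cons⟩

theorem one_mem_subprods (u : List G) : (1 : G) ∈ subprods u :=
  mem_subprods.2 ⟨[], List.nil_sublist u, rfl⟩

theorem OrderedProductOneFree.card_subprods_lt_cons {a : G} {v : List G}
    (h : OrderedProductOneFree (a :: v)) : #(subprods v) < #(subprods (a :: v)) := by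
  have hone : 1 ∉ (subprods v).image (a * ·) := by
    simp only [mem_image, mem_subprods, not_exists, not_and]
    rintro _ ⟨t, ht, rfl⟩ hprod
    exact h (a :: t) (List.cons_sublist_cons.2 ht) (List.cons_ne_nil _ _) hprod
  calc #(subprods v) = #((subprods v).image (a * ·)) :=
        (card_image_of_injective _ (mul_right_injective a)).symm
    _ < #(insert 1 ((subprods v).image (a * ·))) := by rw [card_insert_of_notMem hone]; omega
    _ ≤ #(subprods (a :: v)) := by
        refine card_le_card (insert_subset (one_mem_subprods _) ?_)
        rw [subprods_cons]
        exact subset_union_right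

theorem OrderedProductOneFree.card_subprods_add_length_le {w v : List G}
    (h : OrderedProductOneFree (w ++ v)) : #(subprods v) + w.length ≤ #(subprods (w ++ v)) := by
  induction w with
  | nil => simp
  | cons a w ih =>
    have := ih (h.sublist (List.sublist_cons_self a _))
    have := card_subprods_lt_cons (a := a) (v := w ++ v) h
    simp only [List.cons_append, List.length_cons] at *
    omega

theorem OrderedProductOneFree.length_lt_card_subprods {u : List G}
    (h : OrderedProductOneFree u) : u.length < #(subprods u) := by
  have := (show OrderedProductOneFree (u ++ []) by simpa using h).card_subprods_add_length_le
  simp only [List.append_nil, subprods_nil, card_singleton] at this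
  omega

/-- `Σ(w)` and `a Σ(w)` are too large to be disjoint inside `Σ(a :: w)`, so `a` is a quotient of
two elements of `Σ(w)`. -/
theorem subprods_cons_subset_of_card_lt {H : Subgroup G} {a : G} {w : List G}
    (hw : ∀ x ∈ subprods w, x ∈ H) (hcard : #(subprods (a :: w)) < 2 * #(subprods w)) :
    ∀ x ∈ subprods (a :: w), x ∈ H := by
  have hcard' : #(subprods (a :: w)) < #(subprods w) + #((subprods w).image (a * ·)) := by
    rw [card_image_of_injective _ (mul_right_injective a)]; omega
  obtain ⟨z, hzw⟩ := inter_nonempty_of_card_lt_card_add_card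
    (subprods_cons a w ▸ subset_union_left) (subprods_cons a w ▸ subset_union_right) hcard'
  obtain ⟨hz, hz'⟩ := mem_inter.1 hzw
  obtain ⟨y, hy, rfl⟩ := mem_image.1 hz'
  have ha : a ∈ H := by simpa using H.mul_mem (hw _ hz) (H.inv_mem (hw y hy))
  intro x hx
  rw [subprods_cons, mem_union, mem_image] at hx
  rcases hx with hx | ⟨y', hy', rfl⟩
  · exact hw x hx
  · exact H.mul_mem ha (hw y' hy')

theorem exists_subprods_subset_zpowers {u : List G}
    (htight : ∀ v : List G, v <:+ u → #(subprods v) = v.length + 1) :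
    ∃ g : G, ∀ x ∈ subprods u, x ∈ Subgroup.zpowers g := by
  induction u with
  | nil => exact ⟨1, by simp⟩
  | cons a w ih =>
    obtain ⟨g, hg⟩ := ih fun v hv => htight v (hv.trans (List.suffix_cons a w))
    by_cases hw : w = []
    · subst hw
      refine ⟨a, fun x hx => ?_⟩
      simp only [subprods_cons, subprods_nil, image_singleton, mul_one, mem_union,
        mem_singleton] at hx
      rcases hx with rfl | rfl
      · exact Subgroup.one_mem _
      · exact Subgroup.mem_zpowers x
    · refine ⟨g, subprods_cons_subset_of_card_lt hg ?_⟩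
      rw [htight _ List.suffix_rfl, htight _ (List.suffix_cons a w), List.length_cons]
      have := List.length_pos_iff.2 hw
      omega

theorem OrderedProductOneFree.isCyclic [Fintype G] {u : List G} (h : OrderedProductOneFree u)
    (hu : u.length + 1 = Fintype.card G) : IsCyclic G := by
  have htight : ∀ v : List G, v <:+ u → #(subprods v) = v.length + 1 := by
    rintro v ⟨w, rfl⟩
    have hlow := (h.sublist (List.sublist_append_right w v)).length_lt_card_subprods
    have hup := h.card_subprods_add_length_le.trans (card_le_univ _)
    simp only [List.length_append] at hu
    omega
  obtain ⟨g, hg⟩ := exists_subprods_subset_zpowers htight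
  have huniv : subprods u = univ := eq_univ_of_card _ (by rw [htight u List.suffix_rfl, hu])
  exact isCyclic_iff_exists_zpowers_eq_top.2
    ⟨g, eq_top_iff.2 fun x _ => hg x (huniv ▸ mem_univ x)⟩

end Subprods

theorem orderedDavenport_le {k : ℕ}
    (h : ∀ l : List G, k ≤ l.length → ¬ OrderedProductOneFree l) : orderedDavenport G ≤ k :=
  Nat.sInf_le h

section Davenport

variable [Fintype G]

theorem orderedDavenport_le_card : orderedDavenport G ≤ Fintype.card G :=
  orderedDavenport_le fun _ => not_orderedProductOneFree_of_card_le

theorem not_orderedProductOneFree_of_orderedDavenport_le {l : List G}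
    (hl : orderedDavenport G ≤ l.length) : ¬ OrderedProductOneFree l :=
  Nat.sInf_mem (s := {k : ℕ | ∀ l : List G, k ≤ l.length → ¬ OrderedProductOneFree l})
    ⟨_, fun _ => not_orderedProductOneFree_of_card_le⟩ l hl

theorem OrderedProductOneFree.length_lt_orderedDavenport {l : List G}
    (h : OrderedProductOneFree l) : l.length < orderedDavenport G :=
  lt_of_not_ge fun hl => not_orderedProductOneFree_of_orderedDavenport_le hl h

theorem exists_orderedProductOneFree_length_add_one_eq :
    ∃ l : List G, OrderedProductOneFree l ∧ l.length + 1 = orderedDavenport G := by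
  have hpos : 0 < orderedDavenport G := orderedProductOneFree_nil.length_lt_orderedDavenport
  have hmem : orderedDavenport G - 1 ∉
      {k : ℕ | ∀ l : List G, k ≤ l.length → ¬ OrderedProductOneFree l} :=
    Nat.notMem_of_lt_sInf (Nat.sub_one_lt hpos.ne')
  obtain ⟨l, hl, hfree⟩ : ∃ l : List G, orderedDavenport G - 1 ≤ l.length ∧
      OrderedProductOneFree l := by simpa using hmem
  exact ⟨l.take (orderedDavenport G - 1), hfree.sublist (List.take_sublist _ _), by simp; omega⟩

theorem bddAbove_card_productOneFreeM :
    BddAbove {n : ℕ | ∃ s : Multiset G, ProductOneFreeM s ∧ Multiset.card s = n} :=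
  ⟨Fintype.card G, by rintro _ ⟨s, hs, rfl⟩; exact hs.card_lt_card.le⟩

theorem ProductOneFreeM.card_le_smallDavenport {s : Multiset G} (h : ProductOneFreeM s) :
    Multiset.card s ≤ smallDavenport G :=
  le_csSup bddAbove_card_productOneFreeM ⟨s, h, rfl⟩

theorem exists_productOneFreeM_card_eq_smallDavenport :
    ∃ s : Multiset G, ProductOneFreeM s ∧ Multiset.card s = smallDavenport G := by
  refine Nat.sSup_mem ?_ bddAbove_card_productOneFreeM
  exact ⟨0, 0, fun _ ht htne => absurd (Multiset.le_zero.1 ht) htne, rfl⟩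

theorem smallDavenport_add_one_le_orderedDavenport :
    smallDavenport G + 1 ≤ orderedDavenport G := by
  obtain ⟨s, hs, hcard⟩ := exists_productOneFreeM_card_eq_smallDavenport (G := G)
  rw [← Multiset.coe_toList s] at hs
  simpa [← hcard] using hs.orderedProductOneFree.length_lt_orderedDavenport

theorem orderedDavenport_le_smallDavenport_add_one (hcomm : ∀ x y : G, x * y = y * x) :
    orderedDavenport G ≤ smallDavenport G + 1 :=
  orderedDavenport_le fun l hl h => by
    simpa using (h.productOneFreeM hcomm).card_le_smallDavenport.trans_lt hl

theorem orderedDavenport_eq_card_of_isCyclic [IsCyclic G] :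
    orderedDavenport G = Fintype.card G := by
  obtain ⟨g, hg⟩ := IsCyclic.exists_ofOrder_eq_natCard (α := G)
  have hm : Fintype.card G - 1 < orderOf g := by
    rw [hg, Nat.card_eq_fintype_card]
    exact Nat.sub_one_lt Fintype.card_ne_zero
  have := (orderedProductOneFree_replicate g hm).length_lt_orderedDavenport
  rw [List.length_replicate] at this
  exact orderedDavenport_le_card.antisymm (by omega)

theorem isCyclic_of_orderedDavenport_eq_card (h : orderedDavenport G = Fintype.card G) :
    IsCyclic G := by
  classical
  obtain ⟨l, hfree, hl⟩ := exists_orderedProductOneFree_length_add_one_eq (G := G)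
  exact hfree.isCyclic (hl.trans h)

end Davenport

end ProductOneFree

/-- For any finite group `G`: `d(G) + 1 ≤ D_o(G) ≤ |G|`; if `G` is
abelian then `d(G) + 1 = D_o(G)`; and `D_o(G) = |G|` if and only if `G` is cyclic. -/
theorem smallDavenport_le_orderedDavenport_le_card (G : Type*) [Group G] [Fintype G] :
    smallDavenport G + 1 ≤ orderedDavenport G ∧
    orderedDavenport G ≤ Fintype.card G ∧
    ((∀ x y : G, x * y = y * x) → smallDavenport G + 1 = orderedDavenport G) ∧
    (orderedDavenport G = Fintype.card G ↔ IsCyclic G) :=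
  ⟨smallDavenport_add_one_le_orderedDavenport, orderedDavenport_le_card,
    fun hcomm => smallDavenport_add_one_le_orderedDavenport.antisymm
      (orderedDavenport_le_smallDavenport_add_one hcomm),
    isCyclic_of_orderedDavenport_eq_card, fun _ => orderedDavenport_eq_card_of_isCyclic⟩
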